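/- Let (Λ_j : j ∈ ℤ) be a decreasing sequence of real numbers with Λ_j → 1 as j → −∞ and Λ_j → 0 as j → +∞. Then the kernel K(x,y) = Σ_{j∈ℤ} (Λ_{j−1} − Λ_j)·2^j·χ_{(0,2^{-j}]}(δ(x,y)) belongs to 𝒦, i.e. K ≥ 0, K depends only on δ, and ∫_{ℝ⁺} K(x,y) dy = 1 for every x ∈ ℝ⁺; moreover K is the unique kernel in 𝒦 whose associated sequence Λ_j = Σ_{l>j} 2^{-l}(k_{-l} − k_{-l+1}) is the given sequence. -/

import Mathlib

open MeasureTheory Set Filter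

/-- The dyadic distance on ℝ⁺: the infimum of the lengths of the dyadic
intervals `[k·2^{-j}, (k+1)·2^{-j})` containing both points (and `0` on the diagonal). -/
noncomputable def dyadicDist (x y : ℝ) : ℝ :=
  if x = y then 0
  else sInf {r : ℝ | ∃ (j : ℤ) (k : ℕ), r = (2:ℝ) ^ (-j) ∧
    x ∈ Set.Ico ((k : ℝ) * (2:ℝ) ^ (-j)) (((k : ℝ) + 1) * (2:ℝ) ^ (-j)) ∧
    y ∈ Set.Ico ((k : ℝ) * (2:ℝ) ^ (-j)) (((k : ℝ) + 1) * (2:ℝ) ^ (-j))}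

/-- The sequence `α_l = 2^{-l}(k_{-l} - k_{-l+1})` associated to the level values `k` of a
kernel in `𝒦`. -/
noncomputable def alphaOf (k : ℤ → ℝ) (l : ℤ) : ℝ :=
  (2:ℝ) ^ (-l) * (k (-l) - k (-l + 1))

/-- The profile `φ(s) = Σ_{l∈ℤ} α_l 2^l χ_{(0,2^{-l}]}(s)` associated to the level values `k`. -/
noncomputable def phiOf (k : ℤ → ℝ) (s : ℝ) : ℝ :=
  ∑' l : ℤ, alphaOf k l * ((2:ℝ) ^ l * (if s ∈ Set.Ioc (0:ℝ) ((2:ℝ) ^ (-l)) then 1 else 0))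

/-- The sequence `Λ_j = Σ_{l>j} α_l` associated to the level values `k`. -/
noncomputable def LambdaOf (k : ℤ → ℝ) (j : ℤ) : ℝ :=
  ∑' m : ℕ, alphaOf k (j + 1 + m)

/-- The Haar function `h^j_k(x) = 2^{j/2}(χ_{[0,1/2)} - χ_{[1/2,1)})(2^j x - k)`,
supported in the dyadic interval `I^j_k = [k·2^{-j},(k+1)·2^{-j})`. -/
noncomputable def haarFn (j : ℤ) (k : ℕ) (x : ℝ) : ℝ :=
  (2:ℝ) ^ ((j : ℝ) / 2) *
    (if (2:ℝ) ^ j * x - (k : ℝ) ∈ Set.Ico (0:ℝ) (1/2) then 1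
     else if (2:ℝ) ^ j * x - (k : ℝ) ∈ Set.Ico (1/2 : ℝ) 1 then -1 else 0)

/-- The kernel associated to a sequence `Λ`:
`K(x,y) = Σ_{j∈ℤ} (Λ_{j-1} - Λ_j)·2^j·χ_{(0,2^{-j}]}(δ(x,y))`. -/
noncomputable def kernelOfLambda (Λ : ℤ → ℝ) (x y : ℝ) : ℝ :=
  ∑' j : ℤ, (Λ (j - 1) - Λ j) *
    ((2:ℝ) ^ j * (if dyadicDist x y ∈ Set.Ioc (0:ℝ) ((2:ℝ) ^ (-j)) then 1 else 0))

open Topology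

/-!
For `x ≠ y` in `ℝ⁺` the dyadic intervals containing both points are those of the levels
`j ≤ j₀`, and `δ(x,y) = 2^{-j₀}`. Hence, off the diagonal, `K(x,·)` is
`Σ_j (Λ_{j-1} - Λ_j) 2^j 𝟙_{I_j(x)}`, where `I_j(x)` is the level-`j` dyadic interval
containing `x`, which has length `2^{-j}`; the integral telescopes to
`lim_{-∞} Λ - lim_{+∞} Λ = 1`.

For uniqueness, a kernel `K'` with level values `k'` equals `k'_{-l}` on the annulus
`I_l(x₀) \ I_{l+1}(x₀)` of measure `2^{-l-1}`, so integrability of `K'(x₀,·)` makes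
`Σ_l k'_{-l} 2^{-l}` summable. Then `Λ_{j-1} - Λ_j = α_j = 2^{-j}(k'_{-j} - k'_{-j+1})`,
and `K(x,y) = Σ_{j ≤ j₀} (k'_{-j} - k'_{-j+1})` telescopes to `k'_{-j₀} = K'(x,y)`.
-/

section Telescoping

theorem hasSum_sub_succ_of_summable {G : Type*} [AddCommGroup G] [TopologicalSpace G]
    [IsTopologicalAddGroup G] [T2Space G] {g : ℕ → G} (hg : Summable g) :
    HasSum (fun n => g n - g (n + 1)) (g 0) := by
  simpa using hg.hasSum.sub ((hasSum_nat_add_iff' 1).mpr hg.hasSum)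

theorem Antitone.hasSum_sub_succ {g : ℕ → ℝ} {a : ℝ} (hg : Antitone g)
    (ha : Tendsto g atTop (𝓝 a)) : HasSum (fun n => g n - g (n + 1)) (g 0 - a) := by
  refine (hasSum_iff_tendsto_nat_of_nonneg (fun n => sub_nonneg.2 (hg n.le_succ)) _).2 ?_
  simp_rw [Finset.sum_range_sub']
  exact tendsto_const_nhds.sub ha

theorem Antitone.hasSum_sub_pred {Λ : ℤ → ℝ} {a b : ℝ} (hΛ : Antitone Λ)
    (ha : Tendsto Λ atBot (𝓝 a)) (hb : Tendsto Λ atTop (𝓝 b)) :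
    HasSum (fun j => Λ (j - 1) - Λ j) (a - b) := by
  have hnat : HasSum (fun n : ℕ => Λ (n - 1) - Λ n) (Λ (-1) - b) := by
    have hg : Antitone fun n : ℕ => Λ (n - 1) := fun m n h => hΛ (by simpa using h)
    have hlim : Tendsto (fun n : ℕ => Λ (n - 1)) atTop (𝓝 b) :=
      hb.comp (tendsto_atTop_add_const_right _ (-1) tendsto_natCast_atTop_atTop)
    simpa using hg.hasSum_sub_succ hlim
  have hneg : HasSum (fun n : ℕ => Λ (-(n + 1) - 1) - Λ (-(n + 1))) (-Λ (-1) - -a) := by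
    have hg : Antitone fun n : ℕ => -Λ (-n - 1) := fun m n h => neg_le_neg (hΛ (by simpa using h))
    have hlim : Tendsto (fun n : ℕ => -Λ (-n - 1)) atTop (𝓝 (-a)) :=
      (ha.comp (tendsto_atBot_add_const_right _ (-1)
        (tendsto_neg_atBot_iff.2 tendsto_natCast_atTop_atTop))).neg
    convert hg.hasSum_sub_succ hlim using 1
    · ext n
      push_cast
      ring_nf
    · simp
  convert HasSum.of_nat_of_neg_add_one (f := fun j => Λ (j - 1) - Λ j) hnat hneg using 1
  ring

end Telescoping

section DyadicGeometry

/-- `x ∈ I^j_k` exactly when `k = dyadicIndex j x`. -/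
noncomputable def dyadicIndex (j : ℤ) (x : ℝ) : ℤ := ⌊(2 : ℝ) ^ j * x⌋

noncomputable def dyadicInterval (j : ℤ) (x : ℝ) : Set ℝ :=
  Ico (dyadicIndex j x * (2 : ℝ) ^ (-j)) ((dyadicIndex j x + 1) * (2 : ℝ) ^ (-j))

variable {x y : ℝ} {j : ℤ}

theorem mem_Ico_zpow_iff_dyadicIndex_eq (j m : ℤ) (y : ℝ) :
    y ∈ Ico ((m : ℝ) * (2 : ℝ) ^ (-j)) (((m : ℝ) + 1) * (2 : ℝ) ^ (-j)) ↔
      dyadicIndex j y = m := by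
  have h2 : (0 : ℝ) < 2 ^ j := by positivity
  rw [dyadicIndex, Int.floor_eq_iff, mem_Ico, zpow_neg, ← div_eq_mul_inv, ← div_eq_mul_inv,
    div_le_iff₀ h2, lt_div_iff₀ h2, mul_comm y]

theorem mem_dyadicInterval : y ∈ dyadicInterval j x ↔ dyadicIndex j y = dyadicIndex j x :=
  mem_Ico_zpow_iff_dyadicIndex_eq j _ y

theorem self_mem_dyadicInterval (j : ℤ) (x : ℝ) : x ∈ dyadicInterval j x :=
  mem_dyadicInterval.2 rfl

theorem dyadicIndex_sub_natCast (j : ℤ) (n : ℕ) (x : ℝ) :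
    dyadicIndex (j - n) x = dyadicIndex j x / 2 ^ n := by
  rw [dyadicIndex, dyadicIndex, show ((2 : ℤ) ^ n) = ((2 ^ n : ℕ) : ℤ) by push_cast; rfl,
    ← Int.floor_div_natCast, zpow_sub₀ two_ne_zero, zpow_natCast]
  push_cast
  ring_nf

theorem dyadicIndex_eq_of_le {j' : ℤ} (hj : j' ≤ j) (h : dyadicIndex j x = dyadicIndex j y) :
    dyadicIndex j' x = dyadicIndex j' y := by
  obtain ⟨n, rfl⟩ : ∃ n : ℕ, j' = j - n := ⟨(j - j').toNat, by omega⟩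
  rw [dyadicIndex_sub_natCast, dyadicIndex_sub_natCast, h]

theorem dyadicInterval_antitone (x : ℝ) : Antitone fun j => dyadicInterval j x :=
  fun _ _ hj _ hy => mem_dyadicInterval.2 (dyadicIndex_eq_of_le hj (mem_dyadicInterval.1 hy))

theorem exists_dyadicIndex_eq (hx : 0 ≤ x) (hy : 0 ≤ y) :
    ∃ j, dyadicIndex j x = dyadicIndex j y := by
  obtain ⟨n, hn⟩ := pow_unbounded_of_one_lt (max x y) one_lt_two
  have hzero : ∀ z : ℝ, 0 ≤ z → z ≤ max x y → dyadicIndex (-n) z = 0 := fun z hz hzm => by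
    rw [dyadicIndex, Int.floor_eq_zero_iff, zpow_neg, zpow_natCast, ← div_eq_inv_mul]
    exact ⟨by positivity, (div_lt_one (by positivity)).2 (hzm.trans_lt hn)⟩
  exact ⟨-n, by rw [hzero x hx (le_max_left x y), hzero y hy (le_max_right x y)]⟩

theorem abs_sub_lt_of_dyadicIndex_eq (h : dyadicIndex j x = dyadicIndex j y) :
    |x - y| < 2 ^ (-j) := by
  have hx := (mem_Ico_zpow_iff_dyadicIndex_eq j _ x).2 rfl
  have hy := (mem_Ico_zpow_iff_dyadicIndex_eq j _ y).2 h.symm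
  rw [mem_Ico, add_one_mul] at hx hy
  rw [abs_sub_lt_iff]
  constructor <;> linarith

theorem bddAbove_setOf_dyadicIndex_eq (hxy : x ≠ y) :
    BddAbove {j | dyadicIndex j x = dyadicIndex j y} := by
  obtain ⟨N, hN⟩ := exists_pow_lt_of_lt_one (abs_pos.2 (sub_ne_zero.2 hxy)) one_half_lt_one
  refine ⟨N, fun j hj => ?_⟩
  by_contra! hNj
  have : (2 : ℝ) ^ (-j) ≤ (1 / 2) ^ N := by
    rw [one_div, inv_pow, ← zpow_natCast, ← zpow_neg]
    exact zpow_le_zpow_right₀ one_le_two (by omega)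
  exact (abs_sub_lt_of_dyadicIndex_eq hj).not_ge (this.trans hN.le)

theorem exists_dyadicDist_eq (hx : 0 ≤ x) (hy : 0 ≤ y) (hxy : x ≠ y) :
    ∃ j₀ : ℤ, dyadicDist x y = 2 ^ (-j₀) ∧
      ∀ j, dyadicIndex j x = dyadicIndex j y ↔ j ≤ j₀ := by
  obtain ⟨j₀, hj₀, hmax⟩ := Int.exists_greatest_of_bdd
    (bddAbove_setOf_dyadicIndex_eq hxy) (exists_dyadicIndex_eq hx hy)
  have hiff : ∀ j, dyadicIndex j x = dyadicIndex j y ↔ j ≤ j₀ :=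
    fun j => ⟨hmax j, fun hj => dyadicIndex_eq_of_le hj hj₀⟩
  refine ⟨j₀, ?_, hiff⟩
  rw [dyadicDist, if_neg hxy]
  refine IsLeast.csInf_eq ⟨⟨j₀, (dyadicIndex j₀ x).toNat, rfl, ?_⟩, ?_⟩
  · have hk : (((dyadicIndex j₀ x).toNat : ℕ) : ℝ) = (dyadicIndex j₀ x : ℝ) := by
      exact_mod_cast Int.toNat_of_nonneg (Int.floor_nonneg.2 (by positivity))
    rw [hk, mem_Ico_zpow_iff_dyadicIndex_eq, mem_Ico_zpow_iff_dyadicIndex_eq]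
    exact ⟨rfl, hj₀.symm⟩
  · rintro _ ⟨j, k, rfl, hxk, hyk⟩
    rw [← Int.cast_natCast, mem_Ico_zpow_iff_dyadicIndex_eq] at hxk hyk
    exact zpow_le_zpow_right₀ one_le_two (neg_le_neg ((hiff j).1 (hxk.trans hyk.symm)))

theorem dyadicInterval_subset_Ici (hx : 0 ≤ x) (j : ℤ) : dyadicInterval j x ⊆ Ici 0 := by
  intro y hy
  have : (0 : ℝ) ≤ dyadicIndex j x := by
    exact_mod_cast Int.floor_nonneg.2 (by positivity)
  exact le_trans (by positivity) hy.1

theorem dyadicDist_mem_Ioc_iff (hx : 0 ≤ x) (hy : 0 ≤ y) :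
    dyadicDist x y ∈ Ioc 0 ((2 : ℝ) ^ (-j)) ↔ y ∈ dyadicInterval j x \ {x} := by
  rcases eq_or_ne x y with rfl | hxy
  · simp [dyadicDist]
  obtain ⟨j₀, hd, hiff⟩ := exists_dyadicDist_eq hx hy hxy
  rw [hd, Set.mem_sdiff, mem_dyadicInterval, eq_comm, hiff, mem_Ioc,
    zpow_le_zpow_iff_right₀ one_lt_two, neg_le_neg_iff]
  simp [hxy.symm, zpow_pos]

theorem dyadicDist_eq_of_mem_sdiff (hx : 0 ≤ x)
    (h : y ∈ dyadicInterval j x \ dyadicInterval (j + 1) x) : dyadicDist x y = 2 ^ (-j) := by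
  have hxy : x ≠ y := by
    rintro rfl
    exact h.2 (self_mem_dyadicInterval _ x)
  obtain ⟨j₀, hd, hiff⟩ := exists_dyadicDist_eq hx (dyadicInterval_subset_Ici hx j h.1) hxy
  rw [Set.mem_sdiff, mem_dyadicInterval, mem_dyadicInterval, eq_comm, hiff, eq_comm, hiff] at h
  rw [hd, show j₀ = j by omega]

theorem volume_dyadicInterval (j : ℤ) (x : ℝ) :
    volume (dyadicInterval j x) = ENNReal.ofReal (2 ^ (-j)) := by
  rw [dyadicInterval, Real.volume_Ico]
  ring_nf

theorem measurableSet_dyadicInterval (j : ℤ) (x : ℝ) : MeasurableSet (dyadicInterval j x) :=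
  measurableSet_Ico

end DyadicGeometry

section Kernel

variable {Λ : ℤ → ℝ} {x y : ℝ}

theorem kernelOfLambda_nonneg (hΛ : Antitone Λ) (x y : ℝ) : 0 ≤ kernelOfLambda Λ x y :=
  tsum_nonneg fun _ => mul_nonneg (sub_nonneg.2 (hΛ (by omega)))
    (mul_nonneg (by positivity) (by split_ifs <;> norm_num))

theorem kernelOfLambda_eq_tsum_indicator (Λ : ℤ → ℝ) (hx : 0 ≤ x) (hy : 0 ≤ y) :
    kernelOfLambda Λ x y =
      ∑' j, (dyadicInterval j x \ {x}).indicator (fun _ => (Λ (j - 1) - Λ j) * 2 ^ j) y := by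
  refine tsum_congr fun j => ?_
  simp only [indicator, ← dyadicDist_mem_Ioc_iff hx hy]
  split_ifs <;> ring

theorem integrable_indicator_dyadicInterval (j : ℤ) (x c : ℝ) :
    Integrable ((dyadicInterval j x \ {x}).indicator fun _ => c) (volume.restrict (Ici 0)) := by
  refine (IntegrableOn.integrable_indicator ?_
    ((measurableSet_dyadicInterval j x).diff (measurableSet_singleton x))).restrict
  exact (integrableOn_const (volume_dyadicInterval j x ▸ ENNReal.ofReal_ne_top)).mono_set
    sdiff_subset

theorem setIntegral_Ici_indicator_dyadicInterval (hx : 0 ≤ x) (j : ℤ) (c : ℝ) :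
    ∫ y in Ici 0, (dyadicInterval j x \ {x}).indicator (fun _ => c) y = 2 ^ (-j) * c := by
  have hmeas := (measurableSet_dyadicInterval j x).diff (measurableSet_singleton x)
  rw [integral_indicator_const _ hmeas, measureReal_restrict_apply hmeas,
    inter_eq_left.2 (sdiff_subset.trans (dyadicInterval_subset_Ici hx j)), measureReal_def,
    measure_sdiff_null (measure_singleton x), volume_dyadicInterval,
    ENNReal.toReal_ofReal (by positivity), smul_eq_mul]

theorem integral_kernelOfLambda (hΛ : Antitone Λ) (h1 : Tendsto Λ atBot (𝓝 1))
    (h0 : Tendsto Λ atTop (𝓝 0)) (hx : 0 ≤ x) :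
    ∫ y in Ici 0, kernelOfLambda Λ x y = 1 := by
  have hterm : ∀ j, ∫ y in Ici 0, (dyadicInterval j x \ {x}).indicator
      (fun _ => (Λ (j - 1) - Λ j) * 2 ^ j) y = Λ (j - 1) - Λ j := fun j => by
    rw [setIntegral_Ici_indicator_dyadicInterval hx, mul_left_comm, ← zpow_add₀ two_ne_zero,
      neg_add_cancel, zpow_zero, mul_one]
  have hnorm : ∀ j, ∫ y in Ici 0, ‖(dyadicInterval j x \ {x}).indicator
      (fun _ => (Λ (j - 1) - Λ j) * 2 ^ j) y‖ = Λ (j - 1) - Λ j := fun j => by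
    simp_rw [norm_indicator_eq_indicator_norm]
    rw [Real.norm_of_nonneg (mul_nonneg (sub_nonneg.2 (hΛ (by omega))) (by positivity))]
    exact hterm j
  have hsum : HasSum (fun j => Λ (j - 1) - Λ j) 1 := by
    simpa using hΛ.hasSum_sub_pred h1 h0
  rw [setIntegral_congr_fun measurableSet_Ici fun y hy =>
      kernelOfLambda_eq_tsum_indicator Λ hx hy,
    ← integral_tsum_of_summable_integral_norm (fun j => integrable_indicator_dyadicInterval j x _)
      (by simpa only [hnorm] using hsum.summable),
    tsum_congr hterm, hsum.tsum_eq]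

theorem kernelOfLambda_eq_tsum_of_dyadicDist_eq (Λ : ℤ → ℝ) {x y : ℝ} {j₀ : ℤ}
    (h : dyadicDist x y = 2 ^ (-j₀)) :
    kernelOfLambda Λ x y = ∑' n : ℕ, (Λ (j₀ - n - 1) - Λ (j₀ - n)) * 2 ^ (j₀ - n) := by
  have hinj : Function.Injective fun n : ℕ => j₀ - n := fun a b hab => by simpa using hab
  have hmem : ∀ j, (2 : ℝ) ^ (-j₀) ∈ Ioc 0 ((2 : ℝ) ^ (-j)) ↔ j ≤ j₀ := fun j => by
    rw [mem_Ioc, zpow_le_zpow_iff_right₀ (one_lt_two : (1 : ℝ) < 2), neg_le_neg_iff,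
      and_iff_right (zpow_pos two_pos _)]
  rw [kernelOfLambda, h, ← hinj.tsum_eq]
  · exact tsum_congr fun n => by rw [if_pos ((hmem _).2 (by omega)), mul_one]
  · intro j hj
    have hj₀ : j ≤ j₀ := by
      by_contra hj₀
      rw [Function.mem_support, if_neg (mt (hmem j).1 hj₀), mul_zero, mul_zero] at hj
      exact hj rfl
    exact ⟨(j₀ - j).toNat, by simp only; omega⟩

end Kernel

section Uniqueness

variable {k : ℤ → ℝ}

theorem summable_mul_zpow_of_integrableOn {K : ℝ → ℝ → ℝ} {x₀ : ℝ} (hx₀ : 0 ≤ x₀)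
    (hK : ∀ (j : ℤ) (x y : ℝ), 0 ≤ x → 0 ≤ y → dyadicDist x y = (2 : ℝ) ^ j → K x y = k j)
    (hint : IntegrableOn (K x₀) (Ici 0)) :
    Summable fun l : ℤ => k (-l) * 2 ^ (-l) := by
  set E : ℤ → Set ℝ := fun l => dyadicInterval l x₀ \ dyadicInterval (l + 1) x₀
  have hEmeas : ∀ l, MeasurableSet (E l) := fun l =>
    (measurableSet_dyadicInterval _ _).diff (measurableSet_dyadicInterval _ _)
  have hEdisj : Pairwise (Function.onFun Disjoint E) := by
    intro l l' hll'
    wlog h : l < l' generalizing l l'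
    · exact (this hll'.symm (by omega)).symm
    exact disjoint_left.2 fun y hy hy' => hy.2 (dyadicInterval_antitone x₀ (by omega) hy'.1)
  have hE : ∀ l, ∫ y in E l, K x₀ y = k (-l) * 2 ^ (-l) / 2 := fun l => by
    rw [setIntegral_congr_fun (hEmeas l) fun y hy => hK (-l) x₀ y hx₀
      (dyadicInterval_subset_Ici hx₀ l hy.1) (dyadicDist_eq_of_mem_sdiff hx₀ hy),
      setIntegral_const, measureReal_sdiff (dyadicInterval_antitone x₀ (by omega))
        (measurableSet_dyadicInterval _ _) (volume_dyadicInterval l x₀ ▸ ENNReal.ofReal_ne_top),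
      measureReal_def, measureReal_def,
      volume_dyadicInterval, volume_dyadicInterval, ENNReal.toReal_ofReal (by positivity),
      ENNReal.toReal_ofReal (by positivity), smul_eq_mul, neg_add, zpow_add₀ two_ne_zero]
    ring
  have hsum := hasSum_integral_iUnion hEmeas hEdisj
    (hint.mono_set (iUnion_subset fun l => sdiff_subset.trans (dyadicInterval_subset_Ici hx₀ l)))
  exact (summable_div_const_iff two_ne_zero).1 (hsum.summable.congr hE)

theorem summable_alphaOf (hk : Summable fun l : ℤ => k (-l) * 2 ^ (-l)) :
    Summable (alphaOf k) := by
  have hshift : Summable fun l : ℤ => k (-(l - 1)) * 2 ^ (-(l - 1)) :=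
    hk.comp_injective (sub_left_injective (b := 1))
  refine (hk.sub (hshift.div_const 2)).congr fun l => ?_
  rw [alphaOf, neg_sub', sub_neg_eq_add, zpow_add_one₀ two_ne_zero]
  ring

theorem LambdaOf_sub_one_sub (hα : Summable (alphaOf k)) (j : ℤ) :
    LambdaOf k (j - 1) - LambdaOf k j = alphaOf k j := by
  have hs : Summable fun m : ℕ => alphaOf k (j + m) :=
    hα.comp_injective ((add_right_injective j).comp Nat.cast_injective)
  rw [LambdaOf, LambdaOf, sub_add_cancel, hs.tsum_eq_zero_add]
  simp [add_assoc, add_comm (1 : ℤ)]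

theorem summable_nat_add_of_summable_mul_zpow (hk : Summable fun l : ℤ => k (-l) * 2 ^ (-l))
    (m : ℤ) :
    Summable fun n : ℕ => k (m + n) := by
  have hs : Summable fun n : ℕ => |k (m + n) * 2 ^ (m + n : ℤ)| := by
    refine (hk.abs.comp_injective
      ((neg_injective.comp (add_right_injective m)).comp Nat.cast_injective)).congr fun n => ?_
    simp only [Function.comp_apply, neg_neg]
  refine Summable.of_norm_bounded (hs.mul_left (2 ^ (-m))) fun n => ?_
  have hle : (2 : ℝ) ^ (-(m + n : ℤ)) ≤ 2 ^ (-m) :=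
    zpow_le_zpow_right₀ one_le_two (by omega)
  calc ‖k (m + n)‖ = 2 ^ (-(m + n : ℤ)) * |k (m + n) * 2 ^ (m + n : ℤ)| := by
        rw [abs_mul, abs_of_pos (zpow_pos (two_pos : (0 : ℝ) < 2) (m + n : ℤ)), mul_left_comm,
          ← zpow_add₀ two_ne_zero, neg_add_cancel, zpow_zero, mul_one, Real.norm_eq_abs]
    _ ≤ 2 ^ (-m) * |k (m + n) * 2 ^ (m + n : ℤ)| := mul_le_mul_of_nonneg_right hle (abs_nonneg _)

theorem kernelOfLambda_LambdaOf_of_dyadicDist_eq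
    (hk : Summable fun l : ℤ => k (-l) * 2 ^ (-l)) {x y : ℝ} {j₀ : ℤ}
    (h : dyadicDist x y = 2 ^ (-j₀)) : kernelOfLambda (LambdaOf k) x y = k (-j₀) := by
  rw [kernelOfLambda_eq_tsum_of_dyadicDist_eq _ h]
  convert (hasSum_sub_succ_of_summable
    (summable_nat_add_of_summable_mul_zpow hk (-j₀))).tsum_eq using 1
  · refine tsum_congr fun n => ?_
    rw [LambdaOf_sub_one_sub (summable_alphaOf hk), alphaOf, mul_right_comm,
      ← zpow_add₀ two_ne_zero, neg_add_cancel, zpow_zero, one_mul]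
    push_cast
    ring_nf
  · simp

end Uniqueness

/-- Lemma 4: given a decreasing sequence `Λ_j` with `Λ_j → 1` as `j → -∞` and `Λ_j → 0` as
`j → +∞`, the kernel `K(x,y) = Σ_j (Λ_{j-1} - Λ_j)·2^j·χ_{(0,2^{-j}]}(δ(x,y))` belongs to `𝒦`
(nonnegative, depending only on `δ`, with unit mass), and it is the unique kernel in `𝒦`
whose associated sequence `Λ_j = Σ_{l>j} 2^{-l}(k_{-l} - k_{-l+1})` is the given one. -/
theorem kernelOfLambda_mem_and_unique (Λ : ℤ → ℝ) (hmono : Antitone Λ)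
    (hbot : Filter.Tendsto Λ Filter.atBot (nhds 1))
    (htop : Filter.Tendsto Λ Filter.atTop (nhds 0)) :
    (∀ x y : ℝ, 0 ≤ x → 0 ≤ y → 0 ≤ kernelOfLambda Λ x y) ∧
      (∀ x y x' y' : ℝ, 0 ≤ x → 0 ≤ y → 0 ≤ x' → 0 ≤ y' →
        dyadicDist x y = dyadicDist x' y' → kernelOfLambda Λ x y = kernelOfLambda Λ x' y') ∧
      (∀ x : ℝ, 0 ≤ x → (∫ y in Set.Ici (0:ℝ), kernelOfLambda Λ x y) = 1) ∧
      (∀ (K' : ℝ → ℝ → ℝ) (k' : ℤ → ℝ),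
        (∀ x y : ℝ, 0 ≤ x → 0 ≤ y → 0 ≤ K' x y) →
        (∀ x y x' y' : ℝ, 0 ≤ x → 0 ≤ y → 0 ≤ x' → 0 ≤ y' →
          dyadicDist x y = dyadicDist x' y' → K' x y = K' x' y') →
        (∃ x₀ : ℝ, 0 ≤ x₀ ∧ (∫ y in Set.Ici (0:ℝ), K' x₀ y) = 1) →
        (∀ (j : ℤ) (x y : ℝ), 0 ≤ x → 0 ≤ y → dyadicDist x y = (2:ℝ) ^ j → K' x y = k' j) →
        (∀ j : ℤ, LambdaOf k' j = Λ j) →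
        ∀ x y : ℝ, 0 ≤ x → 0 ≤ y → x ≠ y → K' x y = kernelOfLambda Λ x y) := by
  refine ⟨fun x y _ _ => kernelOfLambda_nonneg hmono x y,
    fun x y x' y' _ _ _ _ h => by rw [kernelOfLambda, kernelOfLambda, h],
    fun x hx => integral_kernelOfLambda hmono hbot htop hx, ?_⟩
  rintro K' k' - - ⟨x₀, hx₀, hint⟩ hlevel hΛ x y hx hy hxy
  have hintegrable : IntegrableOn (K' x₀) (Ici 0) := by
    by_contra h
    rw [integral_undef h] at hint
    exact zero_ne_one hint
  obtain ⟨j₀, hd, -⟩ := exists_dyadicDist_eq hx hy hxy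
  obtain rfl : LambdaOf k' = Λ := funext hΛ
  have hk := summable_mul_zpow_of_integrableOn hx₀ hlevel hintegrable
  rw [hlevel _ x y hx hy hd, kernelOfLambda_LambdaOf_of_dyadicDist_eq hk hd]
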